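/- Let u(x) = ∑_{k ∈ F} c_k e^{2πi k·x} with finite F ⊂ ℤ^d and c_0 = 0, and let ψ_1, ψ_2, ψ_3 : ℤ^d → ℂ. With (A_i u)(x) = ∑_k c_k ψ_i(k) e^{2πi k·x} and u_n^i(x) = (A_i u)(nx), for every continuous compactly supported φ: lim_{n→∞} ∫ φ(x) u_n^1(x) u_n^2(x) u_n^3(x) dx = ( ∑_{k+l+m=0, k,l,m ∈ F} c_k c_l c_m ψ_1(k) ψ_2(l) ψ_3(m) ) · ∫ φ dx. -/
import Mathlib

open MeasureTheory Filter

noncomputable def expc {d : ℕ} (k : Fin d → ℤ) (x : Fin d → ℝ) : ℂ :=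
  Complex.exp (2 * Real.pi * Complex.I * (∑ i, (k i : ℝ) * x i))

lemma expc_continuous {d : ℕ} (k : Fin d → ℤ) (n : ℝ) :
    Continuous (fun x : Fin d → ℝ => expc k (n • x)) := by
  unfold expc; fun_prop

lemma expc_mul {d : ℕ} (k l : Fin d → ℤ) (x : Fin d → ℝ) :
    expc k x * expc l x = expc (k + l) x := by
  unfold expc
  rw [← Complex.exp_add]
  congr 1
  rw [← mul_add]
  congr 1
  push_cast
  rw [← Finset.sum_add_distrib]
  exact Finset.sum_congr rfl fun i _ => by push_cast [Pi.add_apply]; ring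

lemma expc_zero {d : ℕ} (x : Fin d → ℝ) : expc (0 : Fin d → ℤ) x = 1 := by
  unfold expc
  simp

lemma integrable_phi_expc {d : ℕ} (φ : (Fin d → ℝ) → ℂ)
    (hφc : Continuous φ) (hφs : HasCompactSupport φ) (K : Fin d → ℤ) (n : ℝ) :
    Integrable (fun x => φ x * expc K (n • x)) := by
  apply Continuous.integrable_of_hasCompactSupport
  · exact hφc.mul (expc_continuous K n)
  · exact hφs.mul_right

lemma tendsto_integral_phi_expc {d : ℕ} (φ : (Fin d → ℝ) → ℂ)
    (hφc : Continuous φ) (hφs : HasCompactSupport φ) (K : Fin d → ℤ) (hK : K ≠ 0) :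
    Tendsto (fun n : ℕ => ∫ x : Fin d → ℝ, φ x * expc K ((n : ℝ) • x)) atTop (nhds 0) := by
  set L : (Fin d → ℝ) →L[ℝ] ℝ := ∑ i, (K i : ℝ) • ContinuousLinearMap.proj i with hLdef
  have hLapp : ∀ x, L x = ∑ i, (K i : ℝ) * x i := by
    intro x
    simp [hLdef, ContinuousLinearMap.sum_apply]
  have hL : L ≠ 0 := by
    obtain ⟨i, hi⟩ : ∃ i, K i ≠ 0 := by
      by_contra h
      push_neg at h
      exact hK (funext h)
    intro h
    have := hLapp (Pi.single i 1)
    rw [h] at this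
    simp [Pi.single_apply, Finset.sum_ite_eq'] at this
    exact hi (by exact_mod_cast this.symm)
  have hLnorm : 0 < ‖L‖ := norm_pos_iff.mpr hL
  have hcoc : Tendsto (fun n : ℕ => -((n : ℝ) • L)) atTop
      (cocompact ((Fin d → ℝ) →L[ℝ] ℝ)) := by
    rw [← Metric.cobounded_eq_cocompact, ← tendsto_norm_atTop_iff_cobounded]
    have hnn : ∀ n : ℕ, ‖-((n : ℝ) • L)‖ = (n : ℝ) * ‖L‖ := by
      intro n
      rw [norm_neg, norm_smul ((n : ℝ)) L]
      simp
    simp_rw [hnn]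
    exact (tendsto_natCast_atTop_atTop).atTop_mul_const hLnorm
  have hRL := (tendsto_integral_exp_smul_cocompact φ
    (volume : Measure (Fin d → ℝ))).comp hcoc
  convert hRL using 2 with n
  refine integral_congr_ae (Eventually.of_forall fun x => ?_)
  simp only [Function.comp_apply, ContinuousLinearMap.neg_apply, neg_neg, Circle.smul_def,
    Real.fourierChar_apply, ContinuousLinearMap.smul_apply, smul_eq_mul]
  have hsum : (∑ i, (K i : ℝ) * (((n : ℝ) • x) i)) = (n : ℝ) * L x := by
    rw [hLapp, Finset.mul_sum]
    refine Finset.sum_congr rfl fun i _ => ?_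
    simp only [Pi.smul_apply, smul_eq_mul]
    ring
  unfold expc
  rw [hsum, mul_comm]
  congr 1
  push_cast
  ring

/-- Cubic case of the periodic formula: the limit of a triple product of
multiplier-modified oscillating trigonometric polynomials is governed by
triples of frequencies summing to zero. -/
theorem trigPoly_cubic_limit {d : ℕ} (F : Finset (Fin d → ℤ))
    (c : (Fin d → ℤ) → ℂ) (hc0 : c 0 = 0)
    (ψ₁ ψ₂ ψ₃ : (Fin d → ℤ) → ℂ)
    (φ : (Fin d → ℝ) → ℂ) (hφc : Continuous φ) (hφs : HasCompactSupport φ) :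
    Tendsto
      (fun n : ℕ => ∫ x : Fin d → ℝ,
        φ x * (∑ k ∈ F, c k * ψ₁ k * expc k ((n : ℝ) • x)) *
          (∑ l ∈ F, c l * ψ₂ l * expc l ((n : ℝ) • x)) *
          (∑ m ∈ F, c m * ψ₃ m * expc m ((n : ℝ) • x)))
      atTop
      (nhds
        ((∑ k ∈ F, ∑ l ∈ F, ∑ m ∈ F,
            if k + l + m = 0 then c k * c l * c m * ψ₁ k * ψ₂ l * ψ₃ m else 0) *
          ∫ x : Fin d → ℝ, φ x)) := by
  have hkey : ∀ n : ℕ,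
      (∫ x : Fin d → ℝ,
        φ x * (∑ k ∈ F, c k * ψ₁ k * expc k ((n : ℝ) • x)) *
          (∑ l ∈ F, c l * ψ₂ l * expc l ((n : ℝ) • x)) *
          (∑ m ∈ F, c m * ψ₃ m * expc m ((n : ℝ) • x)))
      = ∑ k ∈ F, ∑ l ∈ F, ∑ m ∈ F,
          (c k * c l * c m * ψ₁ k * ψ₂ l * ψ₃ m) *
            ∫ x : Fin d → ℝ, φ x * expc (k + l + m) ((n : ℝ) • x) := by
    intro n
    have hintg : ∀ x : Fin d → ℝ,
        φ x * (∑ k ∈ F, c k * ψ₁ k * expc k ((n : ℝ) • x)) *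
          (∑ l ∈ F, c l * ψ₂ l * expc l ((n : ℝ) • x)) *
          (∑ m ∈ F, c m * ψ₃ m * expc m ((n : ℝ) • x))
        = ∑ k ∈ F, ∑ l ∈ F, ∑ m ∈ F,
            (c k * c l * c m * ψ₁ k * ψ₂ l * ψ₃ m) *
              (φ x * expc (k + l + m) ((n : ℝ) • x)) := by
      intro x
      have step1 :
          (∑ k ∈ F, c k * ψ₁ k * expc k ((n : ℝ) • x)) *
            (∑ l ∈ F, c l * ψ₂ l * expc l ((n : ℝ) • x)) *
            (∑ m ∈ F, c m * ψ₃ m * expc m ((n : ℝ) • x))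
          = ∑ k ∈ F, ∑ l ∈ F, ∑ m ∈ F,
              (c k * ψ₁ k * expc k ((n : ℝ) • x)) *
                (c l * ψ₂ l * expc l ((n : ℝ) • x)) *
                (c m * ψ₃ m * expc m ((n : ℝ) • x)) := by
        rw [Finset.sum_mul_sum, Finset.sum_mul]
        refine Finset.sum_congr rfl fun k _ => ?_
        rw [Finset.sum_mul]
        refine Finset.sum_congr rfl fun l _ => ?_
        rw [Finset.mul_sum]
      calc φ x * (∑ k ∈ F, c k * ψ₁ k * expc k ((n : ℝ) • x)) *
            (∑ l ∈ F, c l * ψ₂ l * expc l ((n : ℝ) • x)) *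
            (∑ m ∈ F, c m * ψ₃ m * expc m ((n : ℝ) • x))
          = φ x * ((∑ k ∈ F, c k * ψ₁ k * expc k ((n : ℝ) • x)) *
              (∑ l ∈ F, c l * ψ₂ l * expc l ((n : ℝ) • x)) *
              (∑ m ∈ F, c m * ψ₃ m * expc m ((n : ℝ) • x))) := by ring
        _ = ∑ k ∈ F, ∑ l ∈ F, ∑ m ∈ F,
              (c k * c l * c m * ψ₁ k * ψ₂ l * ψ₃ m) *
                (φ x * expc (k + l + m) ((n : ℝ) • x)) := by
            rw [step1, Finset.mul_sum]
            refine Finset.sum_congr rfl fun k _ => ?_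
            rw [Finset.mul_sum]
            refine Finset.sum_congr rfl fun l _ => ?_
            rw [Finset.mul_sum]
            refine Finset.sum_congr rfl fun m _ => ?_
            rw [← expc_mul (k + l) m, ← expc_mul k l]
            ring
    simp_rw [hintg]
    rw [integral_finset_sum]
    · refine Finset.sum_congr rfl fun k _ => ?_
      rw [integral_finset_sum]
      · refine Finset.sum_congr rfl fun l _ => ?_
        rw [integral_finset_sum]
        · refine Finset.sum_congr rfl fun m _ => ?_
          rw [integral_const_mul]
        · exact fun m _ => ((integrable_phi_expc φ hφc hφs _ _).const_mul _)
      · exact fun l _ => integrable_finset_sum _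
          (fun m _ => ((integrable_phi_expc φ hφc hφs _ _).const_mul _))
    · exact fun k _ => integrable_finset_sum _ (fun l _ => integrable_finset_sum _
        (fun m _ => ((integrable_phi_expc φ hφc hφs _ _).const_mul _)))
  simp_rw [hkey]
  have hlim : (∑ k ∈ F, ∑ l ∈ F, ∑ m ∈ F,
        if k + l + m = 0 then c k * c l * c m * ψ₁ k * ψ₂ l * ψ₃ m else 0) *
      (∫ x : Fin d → ℝ, φ x)
      = ∑ k ∈ F, ∑ l ∈ F, ∑ m ∈ F,
        if k + l + m = 0 then
          (c k * c l * c m * ψ₁ k * ψ₂ l * ψ₃ m) * ∫ x : Fin d → ℝ, φ x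
        else 0 := by
    simp_rw [Finset.sum_mul, ite_mul, zero_mul]
  rw [hlim]
  refine tendsto_finset_sum _ fun k _ => tendsto_finset_sum _ fun l _ =>
    tendsto_finset_sum _ fun m _ => ?_
  by_cases h : k + l + m = 0
  · simp only [h, if_pos, expc_zero, mul_one]
    exact tendsto_const_nhds
  · rw [if_neg h]
    have := (tendsto_integral_phi_expc φ hφc hφs (k + l + m) h).const_mul
      (c k * c l * c m * ψ₁ k * ψ₂ l * ψ₃ m)
    simpa using this
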